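/- arXiv:2303.16602 — 3 statements merged into one kernel-verified Lean document; each statement's English description precedes it below -/
import Mathlib

section
/- Let (a_n) be a strictly increasing sequence of positive integers such that log(a_n)/n converges to log(α) for some real α > 1, let z be a nonzero complex number with r = |z|, and let 0 ≤ x < 1. Then the Dirichlet-type series ∑_{n=1}^∞ z^n (a_n + x)^{-s} converges absolutely for every complex s with Re(s) > log(r)/log(α). -/
/-! Since `log (a n) / n → log α`, the `n`-th root of the `n`-th term tends to
`‖z‖ / α ^ Re s`, which is `< 1` exactly when `Re s > log ‖z‖ / log α`; the root test concludes. -/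

open Complex Filter Topology

/-- The root test, with the `n`-th root of `‖f n‖` read through `log ‖f n‖ / n`. -/
theorem summable_norm_of_tendsto_log_norm_div_natCast {E : Type*} [SeminormedAddCommGroup E]
    {f : ℕ → E} {L : ℝ} (hL : L < 0)
    (h : Tendsto (fun n : ℕ => Real.log ‖f n‖ / n) atTop (𝓝 L)) :
    Summable (fun n => ‖f n‖) := by
  set c := Real.exp (L / 2)
  have hc1 : c < 1 := Real.exp_lt_one_iff.mpr (by linarith)
  refine .of_norm_bounded_eventually_nat
    (summable_geometric_of_lt_one (Real.exp_pos _).le hc1) ?_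
  filter_upwards [h.eventually_lt_const (by linarith : L < L / 2), eventually_gt_atTop 0]
    with n hlt hn
  rw [norm_norm]
  rcases (norm_nonneg (f n)).eq_or_lt with hzero | hpos
  · rw [← hzero]
    positivity
  · have hlog : Real.log ‖f n‖ < Real.log (c ^ n) := by
      rw [Real.log_pow, Real.log_exp, mul_comm]
      exact (div_lt_iff₀ (Nat.cast_pos.mpr hn)).mp hlt
    exact ((Real.log_lt_log_iff hpos (by positivity)).mp hlog).le

theorem tendsto_log_add_const_div_natCast {u : ℕ → ℝ} (hu : ∀ n, 1 ≤ u n) {x : ℝ} (hx : 0 ≤ x)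
    {L : ℝ} (h : Tendsto (fun n : ℕ => Real.log (u n) / n) atTop (𝓝 L)) :
    Tendsto (fun n : ℕ => Real.log (u n + x) / n) atTop (𝓝 L) := by
  have hupper : Tendsto (fun n : ℕ => Real.log (1 + x) / n + Real.log (u n) / n) atTop
      (𝓝 (0 + L)) :=
    (tendsto_const_div_atTop_nhds_zero_nat _).add h
  rw [zero_add] at hupper
  refine tendsto_of_tendsto_of_tendsto_of_le_of_le h hupper (fun n => ?_) (fun n => ?_)
  · gcongr
    · linarith [hu n]
    · linarith
  · have hu0 : 0 < u n := by linarith [hu n]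
    rw [← add_div, ← Real.log_mul (by linarith) hu0.ne']
    gcongr
    nlinarith [mul_nonneg hx (sub_nonneg.mpr (hu n))]

theorem Complex.log_norm_pow_mul_ofReal_cpow_neg {z : ℂ} (hz : z ≠ 0) {b : ℝ} (hb : 0 < b)
    (n : ℕ) (s : ℂ) :
    Real.log ‖z ^ n * (b : ℂ) ^ (-s)‖ = n * Real.log ‖z‖ - s.re * Real.log b := by
  rw [norm_mul, norm_pow, norm_cpow_eq_rpow_re_of_pos hb,
    Real.log_mul (pow_ne_zero _ (norm_ne_zero_iff.mpr hz)) (Real.rpow_pos_of_pos hb _).ne',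
    Real.log_pow, Real.log_rpow hb, neg_re, neg_mul, sub_eq_add_neg]

theorem lerch_abscissa_convergence_general
    (a : ℕ → ℕ) (hpos : ∀ n, 0 < a n)
    (α : ℝ) (hα : 1 < α)
    (hlog : Tendsto (fun n : ℕ => Real.log (a n) / n) atTop (𝓝 (Real.log α)))
    (z : ℂ) (hz : z ≠ 0) (x : ℝ) (hx0 : 0 ≤ x)
    (s : ℂ) (hs : Real.log ‖z‖ / Real.log α < s.re) :
    Summable (fun n : ℕ =>
      ‖z ^ (n + 1) * (((a (n + 1) : ℝ) + x : ℝ) : ℂ) ^ (-s)‖) := by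
  have ha : ∀ n, (1 : ℝ) ≤ a n := fun n => Nat.one_le_cast.mpr (hpos n)
  have hL : Real.log ‖z‖ - s.re * Real.log α < 0 := by
    have := (div_lt_iff₀ (Real.log_pos hα)).mp hs
    linarith
  have hlim : Tendsto (fun n : ℕ => Real.log ‖z ^ n * (((a n : ℝ) + x : ℝ) : ℂ) ^ (-s)‖ / n)
      atTop (𝓝 (Real.log ‖z‖ - s.re * Real.log α)) := by
    refine (tendsto_const_nhds.sub
      ((tendsto_log_add_const_div_natCast ha hx0 hlog).const_mul s.re)).congr' ?_
    filter_upwards [eventually_ne_atTop 0] with n hn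
    rw [Complex.log_norm_pow_mul_ofReal_cpow_neg hz (by linarith [ha n]), sub_div,
      mul_div_cancel_left₀ _ (Nat.cast_ne_zero.mpr hn), mul_div_assoc]
  exact (summable_nat_add_iff 1).mpr (summable_norm_of_tendsto_log_norm_div_natCast hL hlim)

theorem lerch_abscissa_convergence
    (a : ℕ → ℕ) (hmono : StrictMono a) (hpos : ∀ n, 0 < a n)
    (α : ℝ) (hα : 1 < α)
    (hlog : Tendsto (fun n : ℕ => Real.log (a n) / n) atTop (𝓝 (Real.log α)))
    (z : ℂ) (hz : z ≠ 0) (x : ℝ) (hx0 : 0 ≤ x) (hx1 : x < 1)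
    (s : ℂ) (hs : Real.log ‖z‖ / Real.log α < s.re) :
    Summable (fun n : ℕ =>
      ‖z ^ (n + 1) * (((a (n + 1) : ℝ) + x : ℝ) : ℂ) ^ (-s)‖) :=
  lerch_abscissa_convergence_general a hpos α hα hlog z hz x hx0 s hs
end

section
/- Let (a_n) be a strictly increasing sequence of positive integers with log(a_n)/n → log(α) for some α > 1, let z be a complex number with |z| = r > 0, and 0 ≤ x < 1. Then for every complex s with Re(s) < log(r)/log(α), the series ∑_{n=1}^∞ z^n (a_n + x)^{-s} diverges (the abscissa of convergence equals log(r)/log(α)). -/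
/-!
If the partial sums converged, the terms would tend to `0`. But
`log ‖z ^ n (a_n + x) ^ (-s)‖ = n log ‖z‖ - Re s · log (a_n + x)`, and `log (a_n + x) / n → log α`,
so `log ‖term_n‖ / n → log ‖z‖ - Re s · log α`, which is positive when `Re s < log ‖z‖ / log α`:
the terms grow exponentially.
-/

open Complex Filter Topology

theorem Filter.Tendsto.tendsto_zero_of_tendsto_sum_range {G : Type*} [AddCommGroup G]
    [TopologicalSpace G] [IsTopologicalAddGroup G] {f : ℕ → G} {L : G}
    (h : Tendsto (fun N ↦ ∑ n ∈ Finset.range N, f n) atTop (𝓝 L)) :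
    Tendsto f atTop (𝓝 0) := by
  have hdiff := (h.comp (tendsto_add_atTop_nat 1)).sub h
  rw [sub_self] at hdiff
  refine hdiff.congr fun N ↦ ?_
  simp only [Function.comp_apply, Finset.sum_range_succ, add_sub_cancel_left]

theorem tendsto_norm_atTop_of_tendsto_log_norm_div {E : Type*} [SeminormedAddCommGroup E]
    {f : ℕ → E} {c : ℝ} (hc : 0 < c)
    (h : Tendsto (fun n : ℕ ↦ Real.log ‖f n‖ / n) atTop (𝓝 c)) :
    Tendsto (fun n ↦ ‖f n‖) atTop atTop :=
  tendsto_atTop_mono (fun _ ↦ Real.log_le_self (norm_nonneg _))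
    (Tendsto.num tendsto_natCast_atTop_atTop hc h)

theorem tendsto_log_add_div_of_tendsto_log_div {b : ℕ → ℝ} (hb : ∀ n, 1 ≤ b n) {x l : ℝ}
    (hx : 0 ≤ x) (h : Tendsto (fun n : ℕ ↦ Real.log (b n) / n) atTop (𝓝 l)) :
    Tendsto (fun n : ℕ ↦ Real.log (b n + x) / n) atTop (𝓝 l) := by
  have hgap : ∀ n, 0 ≤ Real.log (b n + x) - Real.log (b n) ∧
      Real.log (b n + x) - Real.log (b n) ≤ Real.log (1 + x) := by
    intro n
    have hbn : 0 < b n := one_pos.trans_le (hb n)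
    have hupper : b n + x ≤ (1 + x) * b n := by nlinarith [hb n]
    have := Real.log_le_log (by positivity) hupper
    rw [Real.log_mul (by positivity) hbn.ne'] at this
    exact ⟨sub_nonneg.mpr (Real.log_le_log hbn (by linarith)), by linarith⟩
  have hgap_div : Tendsto (fun n : ℕ ↦ (Real.log (b n + x) - Real.log (b n)) / n) atTop (𝓝 0) :=
    squeeze_zero (fun n ↦ div_nonneg (hgap n).1 n.cast_nonneg)
      (fun n ↦ div_le_div_of_nonneg_right (hgap n).2 n.cast_nonneg)
      (tendsto_const_div_atTop_nhds_zero_nat _)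
  simpa [sub_div] using h.add hgap_div

theorem Complex.log_norm_pow_mul_ofReal_cpow {z : ℂ} (hz : z ≠ 0) {y : ℝ} (hy : 0 < y)
    (m : ℕ) (s : ℂ) :
    Real.log ‖z ^ m * (y : ℂ) ^ s‖ = m * Real.log ‖z‖ + s.re * Real.log y := by
  rw [norm_mul, norm_pow, norm_cpow_eq_rpow_re_of_pos hy,
    Real.log_mul (by positivity) (by positivity), Real.log_pow, Real.log_rpow hy]

theorem tendsto_log_norm_pow_mul_cpow_div {b : ℕ → ℝ} (hb : ∀ n, 1 ≤ b n) {x : ℝ} (hx : 0 ≤ x)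
    {l : ℝ} (h : Tendsto (fun n : ℕ ↦ Real.log (b n) / n) atTop (𝓝 l))
    {z : ℂ} (hz : z ≠ 0) (s : ℂ) :
    Tendsto (fun n : ℕ ↦ Real.log ‖z ^ n * ((b n + x : ℝ) : ℂ) ^ s‖ / n) atTop
      (𝓝 (Real.log ‖z‖ + s.re * l)) := by
  refine ((tendsto_log_add_div_of_tendsto_log_div hb hx h).const_mul s.re).const_add _
    |>.congr' ?_
  filter_upwards [eventually_ne_atTop 0] with n hn
  have hbx : 0 < b n + x := by linarith [hb n]
  rw [Complex.log_norm_pow_mul_ofReal_cpow hz hbx]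
  field_simp

theorem lerch_abscissa_divergence_general
    (a : ℕ → ℕ) (hpos : ∀ n, 0 < a n)
    (α : ℝ) (hα : 1 < α)
    (hlog : Tendsto (fun n : ℕ => Real.log (a n) / n) atTop (𝓝 (Real.log α)))
    (z : ℂ) (hz : 0 < ‖z‖) (x : ℝ) (hx0 : 0 ≤ x)
    (s : ℂ) (hs : s.re < Real.log ‖z‖ / Real.log α) :
    ¬ ∃ L : ℂ, Tendsto (fun N : ℕ =>
        ∑ n ∈ Finset.range N, z ^ (n + 1) * (((a (n + 1) : ℝ) + x : ℝ) : ℂ) ^ (-s))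
      atTop (𝓝 L) := by
  rintro ⟨L, hL⟩
  have hrate_pos : 0 < Real.log ‖z‖ + (-s).re * Real.log α := by
    rw [lt_div_iff₀ (Real.log_pos hα)] at hs
    simp only [neg_re]
    linarith
  have hgrowth := tendsto_norm_atTop_of_tendsto_log_norm_div hrate_pos
    (tendsto_log_norm_pow_mul_cpow_div (fun n ↦ Nat.one_le_cast.mpr (hpos n)) hx0 hlog
      (norm_pos_iff.mp hz) (-s))
  exact not_tendsto_atTop_of_tendsto_nhds hL.tendsto_zero_of_tendsto_sum_range.norm
    (hgrowth.comp (tendsto_add_atTop_nat 1))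

theorem lerch_abscissa_divergence
    (a : ℕ → ℕ) (hmono : StrictMono a) (hpos : ∀ n, 0 < a n)
    (α : ℝ) (hα : 1 < α)
    (hlog : Tendsto (fun n : ℕ => Real.log (a n) / n) atTop (𝓝 (Real.log α)))
    (z : ℂ) (hz : 0 < ‖z‖) (x : ℝ) (hx0 : 0 ≤ x) (hx1 : x < 1)
    (s : ℂ) (hs : s.re < Real.log ‖z‖ / Real.log α) :
    ¬ ∃ L : ℂ, Tendsto (fun N : ℕ =>
        ∑ n ∈ Finset.range N, z ^ (n + 1) * (((a (n + 1) : ℝ) + x : ℝ) : ℂ) ^ (-s))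
      atTop (𝓝 L) :=
  lerch_abscissa_divergence_general a hpos α hα hlog z hz x hx0 s hs
end

section
/- Let (a_n) be a strictly increasing sequence of positive integers such that the series ∑_{n=1}^∞ z^n a_n^{-σ'} converges absolutely for some real σ'. Then for every complex s with Re(s) > σ' and every real x with 0 ≤ x < 1, the identity ∑_{n=1}^∞ z^n (a_n + x)^{-s} = ∑_{j=0}^∞ C(-s, j) (∑_{n=1}^∞ z^n a_n^{-(s+j)}) x^j holds, with all series involved converging absolutely. -/
/-!
For each `n`, `(aₙ + x)^(-s) = aₙ^(-s) (1 + x/aₙ)^(-s)` with `|x/aₙ| < 1`, so the binomial series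
expands it as `∑ⱼ C(-s, j) aₙ^(-(s+j)) x^j`. Since `aₙ ≥ 1` and `σ' ≤ Re s + j`, the resulting
double series is dominated by the product `(‖z‖ⁿ aₙ^(-σ')) · (‖C(-s, j)‖ xʲ)` of two summable
sequences, so it converges absolutely and may be summed in either order.
-/

open Complex

noncomputable def cbinom (a : ℂ) (j : ℕ) : ℂ :=
  (∏ i ∈ Finset.range j, (a - i)) / (j.factorial : ℂ)

theorem cbinom_eq_choose (a : ℂ) (j : ℕ) : cbinom a j = Ring.choose a j := by
  rw [Ring.choose_eq_smul, cbinom, ← Polynomial.aeval_eq_smeval,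
    ← descPochhammer_eval_eq_prod_range, ← descPochhammer_map (Int.castRingHom ℂ),
    Polynomial.eval_map, Polynomial.aeval_def, algebraMap_int_eq, smul_eq_mul, div_eq_inv_mul]

theorem binomialSeries_coeff_eq_cbinom (a : ℂ) (j : ℕ) :
    (binomialSeries ℂ a).coeff j = cbinom a j := by
  simp [binomialSeries, cbinom_eq_choose]

theorem mem_eball_zero_one_of_norm_lt_one {E : Type*} [SeminormedAddCommGroup E] {u : E}
    (hu : ‖u‖ < 1) : u ∈ Metric.eball (0 : E) 1 := by
  rw [mem_eball_zero_iff, enorm_eq_nnnorm]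
  exact_mod_cast hu

theorem hasSum_cbinom_mul_pow (a : ℂ) {u : ℂ} (hu : ‖u‖ < 1) :
    HasSum (fun j => cbinom a j * u ^ j) ((1 + u) ^ a) := by
  simpa [binomialSeries_coeff_eq_cbinom, mul_comm] using
    one_add_cpow_hasFPowerSeriesOnBall_zero.hasSum (mem_eball_zero_one_of_norm_lt_one hu)

theorem summable_norm_cbinom_mul_pow (a : ℂ) {u : ℂ} (hu : ‖u‖ < 1) :
    Summable fun j => ‖cbinom a j * u ^ j‖ := by
  simpa [binomialSeries_coeff_eq_cbinom, mul_comm] using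
    (binomialSeries ℂ a).summable_norm_apply
      (Metric.eball_subset_eball binomialSeries_radius_ge_one
        (mem_eball_zero_one_of_norm_lt_one hu))

theorem hasSum_cbinom_mul_cpow_sub_mul_pow (w : ℂ) {β x : ℝ} (hβ : 0 < β) (hx : |x| < β) :
    HasSum (fun j => cbinom w j * (β : ℂ) ^ (w - j) * (x : ℂ) ^ j) (((β + x : ℝ) : ℂ) ^ w) := by
  have hu : ‖((x / β : ℝ) : ℂ)‖ < 1 := by
    rwa [norm_real, Real.norm_eq_abs, abs_div, abs_of_pos hβ, div_lt_one hβ]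
  have hsplit : ((β + x : ℝ) : ℂ) ^ w = (β : ℂ) ^ w * (1 + ((x / β : ℝ) : ℂ)) ^ w := by
    have hnonneg : 0 ≤ 1 + x / β := by
      rw [← neg_le_iff_add_nonneg', le_div_iff₀ hβ]
      linarith [(abs_lt.1 hx).1]
    rw [← ofReal_one, ← ofReal_add, ← mul_cpow_ofReal_nonneg hβ.le hnonneg, ← ofReal_mul,
      mul_add, mul_one, mul_div_cancel₀ x hβ.ne']
  rw [hsplit]
  refine ((hasSum_cbinom_mul_pow w hu).mul_left ((β : ℂ) ^ w)).congr_fun fun j => ?_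
  rw [cpow_sub _ _ (ofReal_ne_zero.2 hβ.ne'), cpow_natCast, ofReal_div, div_pow]
  ring

section DirichletSeries

variable {c : ℕ → ℂ} {b : ℕ → ℝ} {σ : ℝ} {s u : ℂ}

theorem norm_mul_ofReal_cpow_neg_le (γ : ℂ) {β : ℝ} {w : ℂ} (hβ : 1 ≤ β) (hw : σ ≤ w.re) :
    ‖γ * (β : ℂ) ^ (-w)‖ ≤ ‖γ‖ * β ^ (-σ) := by
  rw [norm_mul, norm_cpow_eq_rpow_re_of_pos (zero_lt_one.trans_le hβ), neg_re]
  gcongr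

theorem le_re_add_natCast (hs : σ ≤ s.re) (j : ℕ) : σ ≤ (s + j).re := by
  rw [add_re, natCast_re]
  exact le_add_of_le_of_nonneg hs j.cast_nonneg

variable (hb : ∀ n, 1 ≤ b n) (hc : Summable fun n => ‖c n‖ * b n ^ (-σ))
include hb hc

theorem summable_norm_mul_ofReal_cpow_neg {w : ℂ} (hw : σ ≤ w.re) :
    Summable fun n => ‖c n * (b n : ℂ) ^ (-w)‖ :=
  hc.of_nonneg_of_le (fun _ => norm_nonneg _) fun n => norm_mul_ofReal_cpow_neg_le _ (hb n) hw

theorem norm_tsum_mul_ofReal_cpow_neg_le {w : ℂ} (hw : σ ≤ w.re) :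
    ‖∑' n, c n * (b n : ℂ) ^ (-w)‖ ≤ ∑' n, ‖c n‖ * b n ^ (-σ) :=
  (norm_tsum_le_tsum_norm (summable_norm_mul_ofReal_cpow_neg hb hc hw)).trans <|
    (summable_norm_mul_ofReal_cpow_neg hb hc hw).tsum_le_tsum
      (fun n => norm_mul_ofReal_cpow_neg_le _ (hb n) hw) hc

theorem summable_norm_cbinom_mul_tsum_mul_pow (hs : σ ≤ s.re) (hu : ‖u‖ < 1) :
    Summable fun j : ℕ => ‖cbinom (-s) j * (∑' n, c n * (b n : ℂ) ^ (-(s + j))) * u ^ j‖ := by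
  refine ((summable_norm_cbinom_mul_pow (-s) hu).mul_left
    (∑' n, ‖c n‖ * b n ^ (-σ))).of_nonneg_of_le (fun _ => norm_nonneg _) fun j => ?_
  rw [mul_right_comm, norm_mul, mul_comm]
  gcongr
  exact norm_tsum_mul_ofReal_cpow_neg_le hb hc (le_re_add_natCast hs j)

end DirichletSeries

section Rearrangement

variable {c : ℕ → ℂ} {b : ℕ → ℝ} {σ : ℝ} {s u : ℂ} {x : ℝ}

noncomputable def ramanujanTerm (c : ℕ → ℂ) (b : ℕ → ℝ) (s u : ℂ) (n j : ℕ) : ℂ :=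
  cbinom (-s) j * (c n * (b n : ℂ) ^ (-(s + j))) * u ^ j

theorem hasSum_ramanujanTerm (hb : ∀ n, 1 ≤ b n) (hx : |x| < 1) (n : ℕ) :
    HasSum (ramanujanTerm c b s x n) (c n * ((b n + x : ℝ) : ℂ) ^ (-s)) :=
  ((hasSum_cbinom_mul_cpow_sub_mul_pow (-s) (zero_lt_one.trans_le (hb n))
    (hx.trans_le (hb n))).mul_left (c n)).congr_fun fun j => by
      rw [ramanujanTerm, neg_add']
      ring

theorem tsum_ramanujanTerm (j : ℕ) :
    ∑' n, ramanujanTerm c b s u n j =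
      cbinom (-s) j * (∑' n, c n * (b n : ℂ) ^ (-(s + j))) * u ^ j := by
  simp only [ramanujanTerm, tsum_mul_right, tsum_mul_left]

variable (hb : ∀ n, 1 ≤ b n) (hc : Summable fun n => ‖c n‖ * b n ^ (-σ)) (hs : σ ≤ s.re)
include hb hc hs

theorem summable_norm_uncurry_ramanujanTerm (hu : ‖u‖ < 1) :
    Summable fun p : ℕ × ℕ => ‖ramanujanTerm c b s u p.1 p.2‖ := by
  refine (hc.mul_of_nonneg (summable_norm_cbinom_mul_pow (-s) hu)
    (fun n => mul_nonneg (norm_nonneg _) (Real.rpow_nonneg (zero_le_one.trans (hb n)) _))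
    (fun _ => norm_nonneg _)).of_nonneg_of_le (fun _ => norm_nonneg _) fun ⟨n, j⟩ => ?_
  calc ‖ramanujanTerm c b s u n j‖
      = ‖c n * (b n : ℂ) ^ (-(s + j))‖ * ‖cbinom (-s) j * u ^ j‖ := by
        simp only [ramanujanTerm, norm_mul]
        ring
    _ ≤ _ := by
        gcongr
        exact norm_mul_ofReal_cpow_neg_le _ (hb n) (le_re_add_natCast hs j)

theorem summable_norm_mul_ofReal_add_cpow_neg (hx : |x| < 1) :
    Summable fun n => ‖c n * ((b n + x : ℝ) : ℂ) ^ (-s)‖ := by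
  have hu : ‖(x : ℂ)‖ < 1 := by rwa [norm_real, Real.norm_eq_abs]
  obtain ⟨hrow, hrowsums⟩ := (summable_prod_of_nonneg fun _ => norm_nonneg _).1
    (summable_norm_uncurry_ramanujanTerm hb hc hs hu)
  refine hrowsums.of_nonneg_of_le (fun _ => norm_nonneg _) fun n => ?_
  rw [← (hasSum_ramanujanTerm hb hx n).tsum_eq]
  exact norm_tsum_le_tsum_norm (hrow n)

theorem tsum_mul_ofReal_add_cpow_neg_eq (hx : |x| < 1) :
    ∑' n, c n * ((b n + x : ℝ) : ℂ) ^ (-s) =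
      ∑' j : ℕ, cbinom (-s) j * (∑' n, c n * (b n : ℂ) ^ (-(s + j))) * (x : ℂ) ^ j := by
  have hu : ‖(x : ℂ)‖ < 1 := by rwa [norm_real, Real.norm_eq_abs]
  have hsum : Summable (Function.uncurry (ramanujanTerm c b s x)) :=
    (summable_norm_uncurry_ramanujanTerm hb hc hs hu).of_norm
  calc ∑' n, c n * ((b n + x : ℝ) : ℂ) ^ (-s)
      = ∑' (n) (j), ramanujanTerm c b s x n j :=
        tsum_congr fun n => (hasSum_ramanujanTerm hb hx n).tsum_eq.symm
    _ = ∑' (j) (n), ramanujanTerm c b s x n j := hsum.tsum_comm.symm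
    _ = _ := tsum_congr tsum_ramanujanTerm

end Rearrangement

theorem ramanujan_formula_lerch_general
    (a : ℕ → ℕ) (hpos : ∀ n, 0 < a n)
    (z : ℂ) (σ' : ℝ)
    (hconv : Summable (fun n : ℕ => Norm.norm z ^ (n + 1) * ((a (n + 1) : ℝ)) ^ (-σ')))
    (s : ℂ) (hs : σ' < s.re) (x : ℝ) (hx0 : 0 ≤ x) (hx1 : x < 1) :
    (∀ j : ℕ, Summable (fun n : ℕ =>
        Norm.norm (z ^ (n + 1) * ((a (n + 1) : ℝ) : ℂ) ^ (-(s + (j : ℂ)))))) ∧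
    Summable (fun j : ℕ => Norm.norm (cbinom (-s) j *
        (∑' n : ℕ, z ^ (n + 1) * ((a (n + 1) : ℝ) : ℂ) ^ (-(s + (j : ℂ)))) * (x : ℂ) ^ j)) ∧
    Summable (fun n : ℕ =>
        Norm.norm (z ^ (n + 1) * (((a (n + 1) : ℝ) + x : ℝ) : ℂ) ^ (-s))) ∧
    ∑' n : ℕ, z ^ (n + 1) * (((a (n + 1) : ℝ) + x : ℝ) : ℂ) ^ (-s) =
      ∑' j : ℕ, cbinom (-s) j *
        (∑' n : ℕ, z ^ (n + 1) * ((a (n + 1) : ℝ) : ℂ) ^ (-(s + (j : ℂ)))) * (x : ℂ) ^ j := by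
  have hb : ∀ n, 1 ≤ (a (n + 1) : ℝ) := fun n => by exact_mod_cast hpos (n + 1)
  have hc : Summable fun n => ‖z ^ (n + 1)‖ * (a (n + 1) : ℝ) ^ (-σ') := by
    simpa only [norm_pow] using hconv
  have hx : |x| < 1 := abs_lt.2 ⟨by linarith, hx1⟩
  have hu : ‖(x : ℂ)‖ < 1 := by rwa [norm_real, Real.norm_eq_abs]
  exact ⟨fun j => summable_norm_mul_ofReal_cpow_neg hb hc (le_re_add_natCast hs.le j),
    summable_norm_cbinom_mul_tsum_mul_pow hb hc hs.le hu,
    summable_norm_mul_ofReal_add_cpow_neg hb hc hs.le hx,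
    tsum_mul_ofReal_add_cpow_neg_eq hb hc hs.le hx⟩

theorem ramanujan_formula_lerch
    (a : ℕ → ℕ) (hmono : StrictMono a) (hpos : ∀ n, 0 < a n)
    (z : ℂ) (σ' : ℝ)
    (hconv : Summable (fun n : ℕ => Norm.norm z ^ (n + 1) * ((a (n + 1) : ℝ)) ^ (-σ')))
    (s : ℂ) (hs : σ' < s.re) (x : ℝ) (hx0 : 0 ≤ x) (hx1 : x < 1) :
    (∀ j : ℕ, Summable (fun n : ℕ =>
        Norm.norm (z ^ (n + 1) * ((a (n + 1) : ℝ) : ℂ) ^ (-(s + (j : ℂ)))))) ∧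
    Summable (fun j : ℕ => Norm.norm (cbinom (-s) j *
        (∑' n : ℕ, z ^ (n + 1) * ((a (n + 1) : ℝ) : ℂ) ^ (-(s + (j : ℂ)))) * (x : ℂ) ^ j)) ∧
    Summable (fun n : ℕ =>
        Norm.norm (z ^ (n + 1) * (((a (n + 1) : ℝ) + x : ℝ) : ℂ) ^ (-s))) ∧
    ∑' n : ℕ, z ^ (n + 1) * (((a (n + 1) : ℝ) + x : ℝ) : ℂ) ^ (-s) =
      ∑' j : ℕ, cbinom (-s) j *
        (∑' n : ℕ, z ^ (n + 1) * ((a (n + 1) : ℝ) : ℂ) ^ (-(s + (j : ℂ)))) * (x : ℂ) ^ j :=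
  ramanujan_formula_lerch_general a hpos z σ' hconv s hs x hx0 hx1
end
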